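/- arXiv:1706.07237 — 2 statements merged into one kernel-verified Lean document; each statement's English description precedes it below -/
import Mathlib

section
/- Suppose sup_n k_n < ∞ and that sup_{x∈ℝ} |S_{n,SUB}(x) − Φ(x/σ)| → 0 in probability (Condition (2)). Then sup_{x∈ℝ} |C_{n,k_n}(x) − Φ(x/σ)| → 0 in probability as n → ∞ if and only if m_{n,SUB} = ∫ x dS_{n,SUB}(x) → 0 in probability. -/
open MeasureTheory ProbabilityTheory Filter Set ENNReal

noncomputable section

namespace CS

/-- The standard normal CDF `Φ`. -/
def Phi (x : ℝ) : ℝ := ((gaussianReal 0 1) (Iic x)).toReal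

/-- Sup-distance between two functions on `ℝ`: `sup_x |F x - G x|`. -/
def supDist (F G : ℝ → ℝ) : ℝ := ⨆ x : ℝ, |F x - G x|

variable {Ω : Type*} [MeasurableSpace Ω]

/-- Convergence in probability (to a deterministic constant) of a sequence of
random real quantities. -/
def TendstoInProb (P : Measure Ω) (f : ℕ → Ω → ℝ) (c : ℝ) : Prop :=
  ∀ ε : ℝ, 0 < ε → Tendsto (fun n => P {ω | ε ≤ |f n ω - c|}) atTop (nhds 0)

variable (X : ℕ → Ω → ℝ) (t : (n : ℕ) → (Fin n → ℝ) → ℝ) (tP : ℝ) (τ : ℕ → ℝ) (b : ℕ → ℕ)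

/-- Number of length-`b` blocks: `N_n = n - b + 1`. -/
def Nn (n : ℕ) : ℕ := n - b n + 1

/-- The statistic computed on the full sample `X_0, ..., X_{n-1}`. -/
def stat (n : ℕ) (ω : Ω) : ℝ := t n (fun i => X (i : ℕ) ω)

/-- The normalized statistic `T_n = τ_n (t_n(X_1,...,X_n) - t(P))`. -/
def Tn (n : ℕ) (ω : Ω) : ℝ := τ n * (stat X t n ω - tP)

/-- The sampling CDF `F_n` of `T_n`. -/
def Fn (P : Measure Ω) (n : ℕ) (x : ℝ) : ℝ := (P {ω | Tn X t tP τ n ω ≤ x}).toReal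

/-- The `i`-th subsample statistic, centered at the full-sample statistic and scaled:
`τ_b [t_b(X_i,...,X_{i+b-1}) - t_n]`. -/
def subVal (n i : ℕ) (ω : Ω) : ℝ :=
  τ (b n) * (t (b n) (fun j => X (i + (j : ℕ)) ω) - stat X t n ω)

/-- The `i`-th subsample statistic centered at the parameter:
`T_{b,i} = τ_b [t_b(X_i,...,X_{i+b-1}) - t(P)]`. -/
def Tb (n i : ℕ) (ω : Ω) : ℝ :=
  τ (b n) * (t (b n) (fun j => X (i + (j : ℕ)) ω) - tP)

/-- The subsampling estimator `S_{n,SUB}` (a random CDF). -/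
def S (n : ℕ) (ω : Ω) (x : ℝ) : ℝ :=
  (Nn b n : ℝ)⁻¹ * ∑ i ∈ Finset.range (Nn b n),
    (if subVal X t τ b n i ω ≤ x then (1 : ℝ) else 0)

/-- The mean `m_{n,SUB}` of the subsampling distribution. -/
def mSub (n : ℕ) (ω : Ω) : ℝ :=
  (Nn b n : ℝ)⁻¹ * ∑ i ∈ Finset.range (Nn b n), subVal X t τ b n i ω

/-- The variance `σ̂²_{n,SUB}` of the subsampling distribution. -/
def varSub (n : ℕ) (ω : Ω) : ℝ :=
  (Nn b n : ℝ)⁻¹ * ∑ i ∈ Finset.range (Nn b n),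
    (subVal X t τ b n i ω - mSub X t τ b n ω) ^ 2

/-- The subsampling distribution `S_{n,SUB}` as a probability measure on `ℝ`
(the empirical measure of the subsample statistics). -/
def empMeas (n : ℕ) (ω : Ω) : Measure ℝ :=
  (Nn b n : ℝ≥0∞)⁻¹ • ∑ i ∈ Finset.range (Nn b n), Measure.dirac (subVal X t τ b n i ω)

/-- The convolved subsampling distribution: the law of
`Z*_n = k_n^{-1/2} Σ_{i=1}^{k_n} (Y*_{n,i} - m_{n,SUB})` where, given the data,
`Y*_{n,1},...,Y*_{n,k_n}` are i.i.d. with law `S_{n,SUB}`. -/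
def convMeas (k : ℕ → ℕ) (n : ℕ) (ω : Ω) : Measure ℝ :=
  (Measure.pi (fun _ : Fin (k n) => empMeas X t τ b n ω)).map
    (fun v => (∑ j, v j - (k n : ℝ) * mSub X t τ b n ω) / Real.sqrt (k n))

/-- The convolved subsampling estimator `C_{n,k_n}` (a random CDF). -/
def C (k : ℕ → ℕ) (n : ℕ) (ω : Ω) (x : ℝ) : ℝ :=
  (convMeas X t τ b k n ω (Iic x)).toReal

/-- The average subsample CDF `D_{n,b}(x) = N_n^{-1} Σ_i P(T_{b,i} ≤ x)`. -/
def D (P : Measure Ω) (n : ℕ) (x : ℝ) : ℝ :=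
  (Nn b n : ℝ)⁻¹ * ∑ i ∈ Finset.range (Nn b n), (P {ω | Tb X t tP τ b n i ω ≤ x}).toReal

/-- Condition (1): `T_n → N(0,σ²)` in distribution. -/
def Cond1 (P : Measure Ω) (σ : ℝ) : Prop :=
  ∀ x : ℝ, Tendsto (fun n => Fn X t tP τ P n x) atTop (nhds (Phi (x / σ)))

/-- Condition (2): `sup_x |S_{n,SUB}(x) - Φ(x/σ)| → 0` in probability. -/
def Cond2 (P : Measure Ω) (σ : ℝ) : Prop :=
  TendstoInProb P (fun n ω => supDist (S X t τ b n ω) (fun x => Phi (x / σ))) 0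

/-- Condition (3): for every `ε > 0`,
`lim_{m→∞} sup_{n≥m} P(N_n^{-1} Σ_i T_{b,i}² 1{|T_{b,i}| > m} > ε) = 0`. -/
def Cond3 (P : Measure Ω) : Prop :=
  ∀ ε : ℝ, 0 < ε →
    Tendsto (fun m : ℕ =>
        ⨆ n : ℕ, ⨆ _ : m ≤ n,
          P {ω | ε < (Nn b n : ℝ)⁻¹ * ∑ i ∈ Finset.range (Nn b n),
              (if (m : ℝ) < |Tb X t tP τ b n i ω| then (Tb X t tP τ b n i ω) ^ 2 else 0)})
      atTop (nhds 0)

/-- `T_n = o_p(τ_n/τ_b)`, i.e. `(τ_b/τ_n) T_n → 0` in probability. -/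
def SmallOp (P : Measure Ω) : Prop :=
  TendstoInProb P (fun n ω => Tn X t tP τ n ω * (τ (b n) / τ n)) 0

end CS

/-! Given the data, `C_{n,k}` is the law of `(Y₁ + ⋯ + Y_k - k m) / √k` with `Yᵢ` i.i.d. from
`S_{n,SUB}`. Convolving with a probability measure does not increase the sup-distance between
CDFs, so replacing the draws by `N(0, σ²)` one at a time moves the CDF of the sum by at most
`k · sup_x |S_{n,SUB}(x) - Φ(x/σ)|`; for Gaussian draws the law is exactly `N(-√k m, σ²)`. Hence
`|C_{n,k}(x) - Φ((x + √k m)/σ)| ≤ k · sup_x |S_{n,SUB}(x) - Φ(x/σ)|` for every `x`. As `k` is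
bounded, `C_{n,k}` is then uniformly close to `Φ(·/σ)` exactly when the shift `√k m` is small:
`Φ` is `1`-Lipschitz, and at `x = -c/2` a shift by `c` moves `Φ(x/σ)` by
`Φ(c/2σ) - Φ(-c/2σ)`, which is bounded away from `0` when `|c|` is. -/

namespace CS

open scoped NNReal

lemma Phi_eq_cdf (x : ℝ) : Phi x = cdf (gaussianReal 0 1) x := by
  rw [cdf_eq_real, measureReal_def]; rfl

lemma Phi_mono : Monotone Phi := by
  simpa only [funext Phi_eq_cdf] using (cdf (gaussianReal 0 1)).mono

lemma gaussianReal_zero_one_Ioc (a b : ℝ) :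
    gaussianReal 0 1 (Ioc a b) = ENNReal.ofReal (Phi b - Phi a) := by
  rw [Phi_eq_cdf, Phi_eq_cdf, ← StieltjesFunction.measure_Ioc, measure_cdf]

lemma gaussianPDFReal_zero_one_le_one (x : ℝ) : gaussianPDFReal 0 1 x ≤ 1 := by
  have hexp : Real.exp (-(x - 0) ^ 2 / (2 * (1 : ℝ≥0))) ≤ 1 :=
    Real.exp_le_one_iff.2 (by simp only [sub_zero, NNReal.coe_one]; nlinarith [sq_nonneg x])
  have hsqrt : 1 ≤ Real.sqrt (2 * Real.pi * (1 : ℝ≥0)) :=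
    Real.one_le_sqrt.2 (by simp only [NNReal.coe_one]; nlinarith [Real.pi_gt_three])
  rw [gaussianPDFReal]
  exact mul_le_one₀ (inv_le_one_of_one_le₀ hsqrt) (Real.exp_nonneg _) hexp

lemma gaussianReal_zero_one_le_volume (s : Set ℝ) : gaussianReal 0 1 s ≤ volume s := by
  rw [gaussianReal_apply 0 one_ne_zero]
  calc ∫⁻ x in s, gaussianPDF 0 1 x ≤ ∫⁻ _ in s, 1 :=
        lintegral_mono fun x => ENNReal.ofReal_le_one.2 (gaussianPDFReal_zero_one_le_one x)
    _ = volume s := by simp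

lemma abs_Phi_sub_le (a b : ℝ) : |Phi a - Phi b| ≤ |a - b| := by
  wlog hab : b ≤ a generalizing a b
  · rw [abs_sub_comm, abs_sub_comm a]; exact this b a (le_of_not_ge hab)
  have h := gaussianReal_zero_one_le_volume (Ioc b a)
  rw [gaussianReal_zero_one_Ioc, Real.volume_Ioc, ENNReal.ofReal_le_ofReal_iff (by linarith)] at h
  rw [abs_of_nonneg (sub_nonneg.2 (Phi_mono hab)), abs_of_nonneg (by linarith)]
  exact h

lemma Phi_neg_lt_Phi {u : ℝ} (hu : 0 < u) : Phi (-u) < Phi u := by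
  have hvol : 0 < volume (Ioc (-u) u) := by simp [Real.volume_Ioc]; linarith
  have h := (gaussianReal_absolutelyContinuous' 0 one_ne_zero).pos_mono hvol
  rw [gaussianReal_zero_one_Ioc, ENNReal.ofReal_pos] at h
  linarith

lemma Phi_sub_Phi_neg_le {e u : ℝ} (h : e ≤ |u|) :
    Phi e - Phi (-e) ≤ |Phi u - Phi (-u)| := by
  rcases le_total 0 u with hu | hu
  · rw [abs_of_nonneg hu] at h
    have := Phi_mono h; have := Phi_mono (neg_le_neg h)
    exact (by linarith : Phi e - Phi (-e) ≤ Phi u - Phi (-u)).trans (le_abs_self _)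
  · rw [abs_of_nonpos hu] at h
    have := Phi_mono h; have := Phi_mono (neg_le_neg h); rw [neg_neg] at this
    exact (by linarith : Phi e - Phi (-e) ≤ -(Phi u - Phi (-u))).trans (neg_le_abs _)

lemma cdf_gaussianReal (v : ℝ≥0) (hv : v ≠ 0) (x : ℝ) :
    cdf (gaussianReal 0 v) x = Phi (x / Real.sqrt v) := by
  have hs : 0 < Real.sqrt v := Real.sqrt_pos.2 (by positivity)
  have hmap : (gaussianReal 0 1).map (Real.sqrt v * ·) = gaussianReal 0 v := by
    rw [gaussianReal_map_const_mul, mul_zero, mul_one]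
    congr 1
    ext
    exact Real.sq_sqrt v.coe_nonneg
  rw [cdf_eq_real, measureReal_def, ← hmap, Measure.map_apply (by fun_prop) measurableSet_Iic]
  congr
  ext y
  simp only [mem_preimage, mem_Iic, le_div_iff₀ hs, mul_comm]

def iidSum (μ : Measure ℝ) (k : ℕ) : Measure ℝ :=
  (Measure.pi fun _ : Fin k => μ).map fun v => ∑ j, v j

instance (μ : Measure ℝ) [IsProbabilityMeasure μ] (k : ℕ) : IsProbabilityMeasure (iidSum μ k) :=
  Measure.isProbabilityMeasure_map (by fun_prop)

lemma iidSum_zero (μ : Measure ℝ) : iidSum μ 0 = Measure.dirac 0 := by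
  rw [iidSum, Measure.pi_of_empty, Measure.map_dirac' (by fun_prop)]
  simp

lemma iidSum_succ (μ : Measure ℝ) [SigmaFinite μ] (k : ℕ) :
    iidSum μ (k + 1) = μ ∗ iidSum μ k := by
  have hsum : Measurable fun v : Fin k → ℝ => ∑ j, v j := by fun_prop
  have hsplit : (fun v : Fin (k + 1) → ℝ => ∑ j, v j) =
      (fun p : ℝ × ℝ => p.1 + p.2) ∘ Prod.map id (fun v : Fin k → ℝ => ∑ j, v j) ∘
        MeasurableEquiv.piFinSuccAbove (fun _ => ℝ) 0 := by
    funext v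
    exact Fin.sum_univ_succAbove v 0
  rw [iidSum, hsplit, ← Measure.map_map (by fun_prop) (by fun_prop),
    ← Measure.map_map (by fun_prop) (by fun_prop),
    (measurePreserving_piFinSuccAbove (fun _ : Fin (k + 1) => μ) 0).map_eq,
    ← Measure.map_prod_map _ _ measurable_id hsum, Measure.map_id]
  rfl

lemma iidSum_gaussianReal (v : ℝ≥0) (k : ℕ) :
    iidSum (gaussianReal 0 v) k = gaussianReal 0 (k * v) := by
  induction k with
  | zero => simp [iidSum_zero, gaussianReal_zero_var]
  | succ k ih =>
    rw [iidSum_succ, ih, gaussianReal_conv_gaussianReal, zero_add]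
    congr 1
    push_cast
    ring

lemma conv_Iic (μ ν : Measure ℝ) [SFinite μ] [SFinite ν] (x : ℝ) :
    (μ ∗ ν) (Iic x) = ∫⁻ y, μ (Iic (x - y)) ∂ν := by
  rw [Measure.conv, Measure.map_apply measurable_add measurableSet_Iic,
    Measure.prod_apply_symm (measurable_add measurableSet_Iic)]
  congr with y
  congr with z
  simp [le_sub_iff_add_le]

lemma integrable_cdf_const_sub (μ ν : Measure ℝ) [IsFiniteMeasure ν] (x : ℝ) :
    Integrable (fun y => cdf μ (x - y)) ν :=
  Integrable.of_bound ((cdf μ).mono.measurable.comp (by fun_prop)).aestronglyMeasurable 1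
    (ae_of_all _ fun y => by rw [Real.norm_of_nonneg (cdf_nonneg _ _)]; exact cdf_le_one _ _)

lemma cdf_conv (μ ν : Measure ℝ) [IsProbabilityMeasure μ] [IsProbabilityMeasure ν] (x : ℝ) :
    cdf (μ ∗ ν) x = ∫ y, cdf μ (x - y) ∂ν := by
  rw [← ENNReal.ofReal_eq_ofReal_iff (cdf_nonneg _ _) (integral_nonneg fun y => cdf_nonneg _ _),
    ofReal_integral_eq_lintegral_ofReal (integrable_cdf_const_sub μ ν x)
      (ae_of_all _ fun y => cdf_nonneg _ _),
    ofReal_cdf, conv_Iic]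
  simp only [ofReal_cdf]

lemma abs_cdf_conv_sub_le {μ ν ρ : Measure ℝ} [IsProbabilityMeasure μ] [IsProbabilityMeasure ν]
    [IsProbabilityMeasure ρ] {δ : ℝ} (h : ∀ x, |cdf μ x - cdf ν x| ≤ δ) (x : ℝ) :
    |cdf (μ ∗ ρ) x - cdf (ν ∗ ρ) x| ≤ δ := by
  rw [cdf_conv, cdf_conv,
    ← integral_sub (integrable_cdf_const_sub μ ρ x) (integrable_cdf_const_sub ν ρ x)]
  simpa using norm_integral_le_of_norm_le_const (μ := ρ)
    (f := fun y => cdf μ (x - y) - cdf ν (x - y)) (ae_of_all ρ fun y => h (x - y))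

lemma abs_cdf_iidSum_sub_le {μ ν : Measure ℝ} [IsProbabilityMeasure μ] [IsProbabilityMeasure ν]
    {δ : ℝ} (h : ∀ x, |cdf μ x - cdf ν x| ≤ δ) (k : ℕ) (x : ℝ) :
    |cdf (iidSum μ k) x - cdf (iidSum ν k) x| ≤ k * δ := by
  induction k generalizing x with
  | zero => simp [iidSum_zero]
  | succ k ih =>
    rw [iidSum_succ, iidSum_succ, Measure.conv_comm ν]
    calc |cdf (μ ∗ iidSum μ k) x - cdf (iidSum ν k ∗ ν) x|
        ≤ |cdf (μ ∗ iidSum μ k) x - cdf (ν ∗ iidSum μ k) x|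
          + |cdf (iidSum μ k ∗ ν) x - cdf (iidSum ν k ∗ ν) x| := by
          rw [Measure.conv_comm ν]; exact abs_sub_le _ _ _
      _ ≤ δ + k * δ := add_le_add (abs_cdf_conv_sub_le h x) (abs_cdf_conv_sub_le ih x)
      _ = (k + 1 : ℕ) * δ := by push_cast; ring

lemma supDist_nonneg (F G : ℝ → ℝ) : 0 ≤ supDist F G :=
  Real.iSup_nonneg fun _ => abs_nonneg _

lemma supDist_le {F G : ℝ → ℝ} {a : ℝ} (h : ∀ x, |F x - G x| ≤ a) : supDist F G ≤ a :=
  ciSup_le h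

lemma abs_cdf_sub_le_supDist (μ ν : Measure ℝ) (x : ℝ) :
    |cdf μ x - cdf ν x| ≤ supDist (cdf μ) (cdf ν) :=
  le_ciSup (f := fun x => |cdf μ x - cdf ν x|) ⟨1, by
    rintro _ ⟨y, rfl⟩
    exact abs_sub_le_of_nonneg_of_le (cdf_nonneg _ _) (cdf_le_one _ _) (cdf_nonneg _ _)
      (cdf_le_one _ _)⟩ x

lemma Phi_div_eq_cdf {σ : ℝ} (hσ : 0 < σ) :
    (fun x => Phi (x / σ)) = cdf (gaussianReal 0 (σ.toNNReal ^ 2)) := by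
  funext x
  rw [cdf_gaussianReal _ (by positivity), NNReal.coe_pow, Real.coe_toNNReal _ hσ.le,
    Real.sqrt_sq hσ.le]

section Subsampling

variable {Ω : Type*} (X : ℕ → Ω → ℝ) (t : (n : ℕ) → (Fin n → ℝ) → ℝ)
  (τ : ℕ → ℝ) (b : ℕ → ℕ) (k : ℕ → ℕ) (n : ℕ) (ω : Ω)

instance : IsProbabilityMeasure (empMeas X t τ b n ω) := by
  constructor
  rw [empMeas, Measure.smul_apply, Measure.coe_finsetSum, Finset.sum_apply]
  simp only [measure_univ, Finset.sum_const, Finset.card_range, nsmul_eq_mul, mul_one,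
    smul_eq_mul]
  exact ENNReal.inv_mul_cancel (by simp [Nn]) (ENNReal.natCast_ne_top _)

instance : IsProbabilityMeasure (convMeas X t τ b k n ω) :=
  Measure.isProbabilityMeasure_map (by fun_prop)

lemma S_eq_cdf : S X t τ b n ω = cdf (empMeas X t τ b n ω) := by
  funext x
  rw [cdf_eq_real, measureReal_def, S, empMeas, Measure.smul_apply, Measure.coe_finsetSum,
    Finset.sum_apply, smul_eq_mul, ENNReal.toReal_mul, ENNReal.toReal_inv, ENNReal.toReal_natCast,
    ENNReal.toReal_sum fun i _ => measure_ne_top _ _]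
  congr 1
  refine Finset.sum_congr rfl fun i _ => ?_
  rw [Measure.dirac_apply' _ measurableSet_Iic]
  by_cases h : subVal X t τ b n i ω ≤ x <;> simp [h]

lemma C_eq_cdf : C X t τ b k n ω = cdf (convMeas X t τ b k n ω) := by
  funext x
  rw [cdf_eq_real, measureReal_def, C]

lemma C_apply_eq_cdf_iidSum (hk : k n ≠ 0) (x : ℝ) :
    C X t τ b k n ω x = cdf (iidSum (empMeas X t τ b n ω) (k n))
      (Real.sqrt (k n) * x + k n * mSub X t τ b n ω) := by
  have hs : 0 < Real.sqrt (k n) := Real.sqrt_pos.2 (by positivity)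
  rw [C, convMeas, cdf_eq_real, measureReal_def, iidSum,
    Measure.map_apply (by fun_prop) measurableSet_Iic,
    Measure.map_apply (by fun_prop) measurableSet_Iic]
  congr 2
  ext v
  simp only [mem_preimage, mem_Iic, div_le_iff₀ hs]
  constructor <;> intro h <;> linarith

variable {X t τ b k n ω} {σ : ℝ}

lemma abs_C_sub_Phi_le (hσ : 0 < σ) (hk : k n ≠ 0) (x : ℝ) :
    |C X t τ b k n ω x - Phi ((x + Real.sqrt (k n) * mSub X t τ b n ω) / σ)| ≤
      k n * supDist (S X t τ b n ω) (fun x => Phi (x / σ)) := by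
  set m := mSub X t τ b n ω
  have hγ : Phi ((x + Real.sqrt (k n) * m) / σ) =
      cdf (iidSum (gaussianReal 0 (σ.toNNReal ^ 2)) (k n)) (Real.sqrt (k n) * x + k n * m) := by
    rw [iidSum_gaussianReal, cdf_gaussianReal _ (by positivity), NNReal.coe_mul, NNReal.coe_pow,
      Real.coe_toNNReal _ hσ.le, NNReal.coe_natCast, Real.sqrt_mul (Nat.cast_nonneg _),
      Real.sqrt_sq hσ.le]
    congr 1
    field_simp
    rw [mul_add, ← mul_assoc, Real.mul_self_sqrt (Nat.cast_nonneg _)]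
    ring
  rw [C_apply_eq_cdf_iidSum X t τ b k n ω hk, hγ, S_eq_cdf, Phi_div_eq_cdf hσ]
  exact abs_cdf_iidSum_sub_le (abs_cdf_sub_le_supDist _ _) _ _

lemma supDist_C_le (hσ : 0 < σ) (hk : k n ≠ 0) :
    supDist (C X t τ b k n ω) (fun x => Phi (x / σ)) ≤
      k n * supDist (S X t τ b n ω) (fun x => Phi (x / σ)) +
        Real.sqrt (k n) * |mSub X t τ b n ω| / σ := by
  set c := Real.sqrt (k n) * mSub X t τ b n ω
  refine supDist_le fun x => ?_
  have hshift : |Phi ((x + c) / σ) - Phi (x / σ)| ≤ Real.sqrt (k n) * |mSub X t τ b n ω| / σ := by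
    refine (abs_Phi_sub_le _ _).trans_eq ?_
    rw [div_sub_div_same, add_sub_cancel_left, abs_div, abs_of_pos hσ, abs_mul,
      abs_of_nonneg (Real.sqrt_nonneg _)]
  calc |C X t τ b k n ω x - Phi (x / σ)|
      ≤ |C X t τ b k n ω x - Phi ((x + c) / σ)| + |Phi ((x + c) / σ) - Phi (x / σ)| :=
        abs_sub_le _ _ _
    _ ≤ _ := add_le_add (abs_C_sub_Phi_le hσ hk x) hshift

lemma Phi_sub_Phi_neg_le_supDist (hσ : 0 < σ) (hk : k n ≠ 0) :
    |Phi (Real.sqrt (k n) * mSub X t τ b n ω / (2 * σ)) -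
        Phi (-(Real.sqrt (k n) * mSub X t τ b n ω / (2 * σ)))| ≤
      k n * supDist (S X t τ b n ω) (fun x => Phi (x / σ)) +
        supDist (C X t τ b k n ω) (fun x => Phi (x / σ)) := by
  set c := Real.sqrt (k n) * mSub X t τ b n ω
  have hC := abs_cdf_sub_le_supDist (convMeas X t τ b k n ω) (gaussianReal 0 (σ.toNNReal ^ 2))
    (-c / 2)
  rw [← C_eq_cdf, ← Phi_div_eq_cdf hσ] at hC
  have h1 : c / (2 * σ) = (-c / 2 + c) / σ := by field_simp; ring
  have h2 : -(c / (2 * σ)) = -c / 2 / σ := by field_simp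
  rw [h2, h1]
  calc |Phi ((-c / 2 + c) / σ) - Phi (-c / 2 / σ)|
      ≤ |Phi ((-c / 2 + c) / σ) - C X t τ b k n ω (-c / 2)| +
          |C X t τ b k n ω (-c / 2) - Phi (-c / 2 / σ)| := abs_sub_le _ _ _
    _ ≤ _ := add_le_add ((abs_sub_comm _ _).trans_le (abs_C_sub_Phi_le hσ hk _)) hC

end Subsampling

lemma TendstoInProb.zero_of_imp_or {Ω : Type*} [MeasurableSpace Ω] {P : Measure Ω}
    {f g h : ℕ → Ω → ℝ} (hf : TendstoInProb P f 0) (hg : TendstoInProb P g 0)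
    (H : ∀ ε > 0, ∃ δ > 0, ∀ n ω, ε ≤ |h n ω| → δ ≤ |f n ω| ∨ δ ≤ |g n ω|) :
    TendstoInProb P h 0 := by
  intro ε hε
  obtain ⟨δ, hδ, hH⟩ := H ε hε
  have hsum := (hf δ hδ).add (hg δ hδ)
  rw [add_zero] at hsum
  refine tendsto_of_tendsto_of_tendsto_of_le_of_le tendsto_const_nhds hsum (fun _ => zero_le)
    fun n => (measure_mono fun ω hω => ?_).trans (measure_union_le _ _)
  simpa using hH n ω (by simpa using hω)

section Consistency

variable {Ω : Type*} [MeasurableSpace Ω] {P : Measure Ω} {X : ℕ → Ω → ℝ}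
  {t : (n : ℕ) → (Fin n → ℝ) → ℝ} {τ : ℕ → ℝ} {b : ℕ → ℕ} {k : ℕ → ℕ} {K : ℕ} {σ : ℝ}

lemma tendstoInProb_mSub_of_C (hσ : 0 < σ) (hk : ∀ n, 0 < k n) (hK : ∀ n, k n ≤ K)
    (h2 : Cond2 X t τ b P σ)
    (hC : TendstoInProb P (fun n ω => supDist (C X t τ b k n ω) (fun x => Phi (x / σ))) 0) :
    TendstoInProb P (mSub X t τ b) 0 := by
  refine TendstoInProb.zero_of_imp_or h2 hC fun ε hε => ?_
  set η := Phi (ε / (2 * σ)) - Phi (-(ε / (2 * σ)))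
  have hη : 0 < η := sub_pos.2 (Phi_neg_lt_Phi (by positivity))
  refine ⟨η / (K + 1), by positivity, fun n ω hm => ?_⟩
  by_contra! hsmall
  rw [abs_of_nonneg (supDist_nonneg _ _), abs_of_nonneg (supDist_nonneg _ _)] at hsmall
  have hk1 : (1 : ℝ) ≤ k n := by exact_mod_cast hk n
  have hkK : (k n : ℝ) ≤ K := by exact_mod_cast hK n
  have hscaled : ε / (2 * σ) ≤ |Real.sqrt (k n) * mSub X t τ b n ω / (2 * σ)| := by
    rw [abs_div, abs_of_pos (by positivity : 0 < 2 * σ), abs_mul,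
      abs_of_nonneg (Real.sqrt_nonneg _)]
    gcongr
    exact hm.trans (le_mul_of_one_le_left (abs_nonneg _) (Real.one_le_sqrt.2 hk1))
  have hgap := (Phi_sub_Phi_neg_le hscaled).trans
    (Phi_sub_Phi_neg_le_supDist hσ (hk n).ne' (ω := ω))
  have hS := mul_le_mul hkK hsmall.1.le (supDist_nonneg _ _) (Nat.cast_nonneg K)
  have hδ : (K : ℝ) * (η / (K + 1)) + η / (K + 1) = η := by field_simp
  linarith [hsmall.2]

lemma tendstoInProb_C_of_mSub (hσ : 0 < σ) (hk : ∀ n, 0 < k n) (hK : ∀ n, k n ≤ K)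
    (h2 : Cond2 X t τ b P σ) (hm : TendstoInProb P (mSub X t τ b) 0) :
    TendstoInProb P (fun n ω => supDist (C X t τ b k n ω) (fun x => Phi (x / σ))) 0 := by
  refine TendstoInProb.zero_of_imp_or h2 hm fun ε hε => ?_
  set A := K + Real.sqrt K / σ
  have hA : 0 ≤ A := by positivity
  refine ⟨ε / (A + 1), by positivity, fun n ω hCε => ?_⟩
  by_contra! hsmall
  rw [abs_of_nonneg (supDist_nonneg _ _)] at hsmall hCε
  have hkK : (k n : ℝ) ≤ K := by exact_mod_cast hK n
  have hS := mul_le_mul hkK hsmall.1.le (supDist_nonneg _ _) (Nat.cast_nonneg K)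
  have hm : Real.sqrt (k n) * |mSub X t τ b n ω| / σ ≤ Real.sqrt K * (ε / (A + 1)) / σ := by
    gcongr
    exact hsmall.2.le
  have hbound := (supDist_C_le hσ (hk n).ne' (ω := ω)).trans (add_le_add hS hm)
  have hδ : (K : ℝ) * (ε / (A + 1)) + Real.sqrt K * (ε / (A + 1)) / σ = A * (ε / (A + 1)) := by
    ring
  have hlt : A * (ε / (A + 1)) < ε := by
    rw [mul_div_assoc', div_lt_iff₀ (by positivity)]
    linarith
  linarith

end Consistency

end CS

open CS MeasureTheory Filter

theorem stmt1_general {Ω : Type*} [MeasurableSpace Ω] (P : Measure Ω)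
    (X : ℕ → Ω → ℝ) (t : (n : ℕ) → (Fin n → ℝ) → ℝ) (τ : ℕ → ℝ) (b : ℕ → ℕ)
    (σ : ℝ) (hσ : 0 < σ)
    (k : ℕ → ℕ) (hk : ∀ n, 0 < k n) (hksup : ∃ K : ℕ, ∀ n, k n ≤ K)
    (h2 : Cond2 X t τ b P σ) :
    TendstoInProb P (fun n ω => supDist (C X t τ b k n ω) (fun x => Phi (x / σ))) 0 ↔
      TendstoInProb P (mSub X t τ b) 0 := by
  obtain ⟨K, hK⟩ := hksup
  exact ⟨tendstoInProb_mSub_of_C hσ hk hK h2, tendstoInProb_C_of_mSub hσ hk hK h2⟩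

theorem stmt1 {Ω : Type*} [MeasurableSpace Ω] (P : Measure Ω) [IsProbabilityMeasure P]
    (X : ℕ → Ω → ℝ) (hX : ∀ i, Measurable (X i))
    (t : (n : ℕ) → (Fin n → ℝ) → ℝ) (ht : ∀ n, Measurable (t n))
    (τ : ℕ → ℝ) (hτ : ∀ n, 0 < τ n)
    (b : ℕ → ℕ) (hb : ∀ n, 2 ≤ n → 1 ≤ b n ∧ b n < n)
    (σ : ℝ) (hσ : 0 < σ)
    (k : ℕ → ℕ) (hk : ∀ n, 0 < k n) (hksup : ∃ K : ℕ, ∀ n, k n ≤ K)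
    (h2 : Cond2 X t τ b P σ) :
    TendstoInProb P (fun n ω => supDist (C X t τ b k n ω) (fun x => Phi (x / σ))) 0 ↔
      TendstoInProb P (mSub X t τ b) 0 :=
  stmt1_general P X t τ b σ hσ k hk hksup h2
end
end

section
/- Let {X_n} be a sequence of real-valued random variables with finite variances and X a real-valued random variable with finite variance, such that X_n → X in distribution and Var(X_n) → Var(X) < ∞ as n → ∞. Then E X_n → E X ∈ ℝ and E X_n² → E X² < ∞. -/
/-!
Bounded variances and convergence of the distribution functions first keep the means bounded:
some fixed window `(b, a]` eventually carries mass at least `1/2` under every `X n`, and by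
Chebyshev's inequality a mean far away from that window would force a large variance. Hence the
second moments are eventually bounded by some `C`, and all tails `P(|X n| ≥ t)` are dominated by
`min 1 (C / t²)`, which is integrable on `(0, ∞)`. Writing
`E Y = ∫₀^∞ P(Y > t) dt - ∫₀^∞ P(Y ≤ -t) dt`, and using that a distribution function has only
countably many discontinuities, dominated convergence gives `E (X n) → E X`, and then `E (X n)² = Var (X n) + (E (X n))² → Var X + (E X)² = E X²`.
-/

open MeasureTheory ProbabilityTheory Filter Set Topology

section

variable {Ω : Type*} [MeasurableSpace Ω] {P : Measure Ω} {Y : Ω → ℝ}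

lemma MeasureTheory.Integrable.integral_eq_integral_Ioi_sub (hY : Integrable Y P) :
    ∫ ω, Y ω ∂P =
      (∫ t in Ioi 0, P.real {ω | t < Y ω}) - ∫ t in Ioi 0, P.real {ω | Y ω ≤ -t} := by
  have hpos : ∫ ω, max (Y ω) 0 ∂P = ∫ t in Ioi 0, P.real {ω | t < Y ω} := by
    rw [hY.pos_part.integral_eq_integral_meas_lt (.of_forall fun _ => le_max_right _ _)]
    refine setIntegral_congr_fun measurableSet_Ioi fun t (ht : 0 < t) => ?_
    simp only [lt_max_iff, ht.not_gt, or_false]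
  have hneg : ∫ ω, max (-Y ω) 0 ∂P = ∫ t in Ioi 0, P.real {ω | Y ω ≤ -t} := by
    rw [hY.fun_neg.pos_part.integral_eq_integral_meas_le (.of_forall fun _ => le_max_right _ _)]
    refine setIntegral_congr_fun measurableSet_Ioi fun t (ht : 0 < t) => ?_
    simp only [le_max_iff, ht.not_ge, or_false, le_neg]
  calc ∫ ω, Y ω ∂P = ∫ ω, (max (Y ω) 0 - max (-Y ω) 0) ∂P := by
        simp only [max_zero_sub_max_neg_zero_eq_self]
    _ = ∫ ω, max (Y ω) 0 ∂P - ∫ ω, max (-Y ω) 0 ∂P :=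
        integral_sub hY.pos_part hY.fun_neg.pos_part
    _ = _ := by rw [hpos, hneg]

lemma integral_sq_eq_variance_add_sq [IsProbabilityMeasure P] (hY : MemLp Y 2 P) :
    ∫ ω, Y ω ^ 2 ∂P = variance Y P + (∫ ω, Y ω ∂P) ^ 2 := by
  rw [variance_eq_sub hY]
  simp only [Pi.pow_apply, sub_add_cancel]

lemma measureReal_le_min_one_integral_sq_div_sq [IsProbabilityMeasure P]
    (hY : Integrable (fun ω => Y ω ^ 2) P) {t : ℝ} (ht : 0 < t) {s : Set Ω}
    (hs : s ⊆ {ω | t ≤ |Y ω|}) :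
    P.real s ≤ min 1 ((∫ ω, Y ω ^ 2 ∂P) / t ^ 2) := by
  refine le_min measureReal_le_one ?_
  have hsq : s ⊆ {ω | t ^ 2 ≤ Y ω ^ 2} := fun ω hω =>
    show t ^ 2 ≤ Y ω ^ 2 by simpa only [sq_abs] using pow_le_pow_left₀ ht.le (hs hω) 2
  rw [le_div_iff₀ (by positivity), mul_comm]
  calc t ^ 2 * P.real s ≤ t ^ 2 * P.real {ω | t ^ 2 ≤ Y ω ^ 2} :=
        mul_le_mul_of_nonneg_left (measureReal_mono hsq) (sq_nonneg t)
    _ ≤ ∫ ω, Y ω ^ 2 ∂P :=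
        mul_meas_ge_le_integral_of_nonneg (.of_forall fun _ => sq_nonneg _) hY _

lemma abs_integral_le_add_sqrt_variance_div [IsFiniteMeasure P] (hY : MemLp Y 2 P)
    {R p : ℝ} (hp : 0 < p) (hR : p ≤ P.real {ω | |Y ω| ≤ R}) :
    |∫ ω, Y ω ∂P| ≤ R + √(variance Y P / p) := by
  by_contra! h
  set c := |∫ ω, Y ω ∂P| - R
  have hc : √(variance Y P / p) < c := by linarith
  have hc0 : 0 < c := (Real.sqrt_nonneg _).trans_lt hc
  have hsub : {ω | |Y ω| ≤ R} ⊆ {ω | c ≤ |Y ω - ∫ ω, Y ω ∂P|} :=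
    fun ω (hω : |Y ω| ≤ R) => by
      have := abs_sub_abs_le_abs_sub (∫ ω, Y ω ∂P) (Y ω)
      rw [abs_sub_comm] at this
      show c ≤ _
      linarith
  have hcheb : p ≤ variance Y P / c ^ 2 :=
    hR.trans <| (measureReal_mono hsub).trans <|
      ENNReal.toReal_le_of_le_ofReal (div_nonneg (variance_nonneg _ _) (sq_nonneg _))
        (meas_ge_le_variance_div_sq hY hc0)
  rw [Real.sqrt_lt' hc0, div_lt_iff₀ hp] at hc
  rw [le_div_iff₀ (by positivity)] at hcheb
  linarith

lemma measureReal_setOf_lt_eq_one_sub [IsProbabilityMeasure P] (hY : AEMeasurable Y P) (t : ℝ) :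
    P.real {ω | t < Y ω} = 1 - P.real {ω | Y ω ≤ t} := by
  rw [show {ω | t < Y ω} = (Y ⁻¹' Iic t)ᶜ by ext; simp]
  exact probReal_compl_eq_one_sub₀ (hY.nullMeasurableSet_preimage measurableSet_Iic)

lemma monotone_measureReal_setOf_le [IsFiniteMeasure P] (Y : Ω → ℝ) :
    Monotone fun x => P.real {ω | Y ω ≤ x} :=
  fun _ _ hxy => measureReal_mono fun _ hω => le_trans hω hxy

lemma measureReal_le_le_add_measureReal_abs_le [IsFiniteMeasure P] (a b : ℝ) :
    P.real {ω | Y ω ≤ a} ≤ P.real {ω | Y ω ≤ b} + P.real {ω | |Y ω| ≤ |a| + |b|} := by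
  have hsub : {ω | Y ω ≤ a} ⊆ {ω | Y ω ≤ b} ∪ {ω | |Y ω| ≤ |a| + |b|} :=
    fun ω (h : Y ω ≤ a) => by
      by_cases hb : Y ω ≤ b
      · exact Or.inl hb
      · refine Or.inr (show |Y ω| ≤ |a| + |b| from abs_le.2 ⟨?_, ?_⟩) <;>
          linarith [le_abs_self a, neg_abs_le b, abs_nonneg a, abs_nonneg b]
  exact (measureReal_mono hsub).trans (measureReal_union_le _ _)

end

lemma Monotone.dense_setOf_continuousAt {f : ℝ → ℝ} (hf : Monotone f) :
    Dense {x | ContinuousAt f x} := by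
  simpa only [compl_ofPred, not_not] using hf.countable_not_continuousAt.dense_compl ℝ

lemma Monotone.exists_continuousAt_lt_of_tendsto_atTop {f : ℝ → ℝ} (hf : Monotone f)
    {c L : ℝ} (hL : Tendsto f atTop (𝓝 L)) (hc : c < L) : ∃ a, ContinuousAt f a ∧ c < f a := by
  obtain ⟨M, hM⟩ := eventually_atTop.1 (hL.eventually_const_lt hc)
  obtain ⟨a, ha, hMa⟩ := hf.dense_setOf_continuousAt.exists_gt M
  exact ⟨a, ha, hM a hMa.le⟩

lemma Monotone.exists_continuousAt_gt_of_tendsto_atBot {f : ℝ → ℝ} (hf : Monotone f)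
    {c L : ℝ} (hL : Tendsto f atBot (𝓝 L)) (hc : L < c) : ∃ b, ContinuousAt f b ∧ f b < c := by
  obtain ⟨N, hN⟩ := eventually_atBot.1 (hL.eventually_lt_const hc)
  obtain ⟨b, hb, hbN⟩ := hf.dense_setOf_continuousAt.exists_lt N
  exact ⟨b, hb, hN b hbN.le⟩

lemma integrableOn_Ioi_min_one_div_sq {C : ℝ} (hC : 0 ≤ C) :
    IntegrableOn (fun t : ℝ => min 1 (C / t ^ 2)) (Ioi 0) := by
  have hmeas : Measurable fun t : ℝ => min 1 (C / t ^ 2) := by fun_prop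
  rw [← Ioc_union_Ioi_eq_Ioi zero_le_one]
  refine IntegrableOn.union ?_ ?_
  · refine Measure.integrableOn_of_bounded (M := 1) measure_Ioc_lt_top.ne
      hmeas.aestronglyMeasurable (ae_restrict_of_forall_mem measurableSet_Ioc fun t _ => ?_)
    rw [Real.norm_eq_abs, abs_of_nonneg (by positivity)]
    exact min_le_left _ _
  · have hpow := (integrableOn_Ioi_rpow_of_lt (by norm_num : (-2 : ℝ) < -1) one_pos).const_mul C
    refine hpow.mono' hmeas.aestronglyMeasurable
      (ae_restrict_of_forall_mem measurableSet_Ioi fun t ht => ?_)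
    have ht0 : 0 < t := one_pos.trans ht
    rw [Real.norm_eq_abs, abs_of_nonneg (by positivity), Real.rpow_neg ht0.le, Real.rpow_two,
      ← div_eq_mul_inv]
    exact min_le_right _ _

lemma tendsto_setIntegral_Ioi_of_abs_le_min_one_div_sq {ι : Type*} {l : Filter ι}
    [l.IsCountablyGenerated] {f : ι → ℝ → ℝ} {g : ℝ → ℝ} {C : ℝ} (hC : 0 ≤ C)
    (hf : ∀ i, Measurable (f i))
    (hbound : ∀ᶠ i in l, ∀ t, 0 < t → |f i t| ≤ min 1 (C / t ^ 2))
    (hlim : ∀ᵐ t, Tendsto (fun i => f i t) l (𝓝 (g t))) :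
    Tendsto (fun i => ∫ t in Ioi 0, f i t) l (𝓝 (∫ t in Ioi 0, g t)) :=
  tendsto_integral_filter_of_dominated_convergence _
    (.of_forall fun i => (hf i).aestronglyMeasurable)
    (hbound.mono fun _ hi => ae_restrict_of_forall_mem measurableSet_Ioi hi)
    (integrableOn_Ioi_min_one_div_sq hC) (ae_restrict_of_ae hlim)

section

variable {Ω ι : Type*} [MeasurableSpace Ω] {P : Measure Ω} [IsProbabilityMeasure P]
  {l : Filter ι} {Y : ι → Ω → ℝ} {X : Ω → ℝ}

theorem tendsto_integral_of_tendsto_cdf_of_integral_sq_le [l.IsCountablyGenerated]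
    (hY : ∀ i, MemLp (Y i) 2 P) (hX : Integrable X P)
    (hdist : ∀ x, ContinuousAt (fun y => P.real {ω | X ω ≤ y}) x →
      Tendsto (fun i => P.real {ω | Y i ω ≤ x}) l (𝓝 (P.real {ω | X ω ≤ x})))
    {C : ℝ} (hC : ∀ᶠ i in l, ∫ ω, Y i ω ^ 2 ∂P ≤ C) :
    Tendsto (fun i => ∫ ω, Y i ω ∂P) l (𝓝 (∫ ω, X ω ∂P)) := by
  have hD := (monotone_measureReal_setOf_le (P := P) X).countable_not_continuousAt
  have htail : ∀ᶠ i in l, ∀ {s : ℝ → Set Ω}, (∀ t, s t ⊆ {ω | t ≤ |Y i ω|}) →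
      ∀ t, 0 < t → |P.real (s t)| ≤ min 1 (max C 0 / t ^ 2) := by
    filter_upwards [hC] with i hi s hs t ht
    rw [abs_of_nonneg measureReal_nonneg]
    refine (measureReal_le_min_one_integral_sq_div_sq (hY i).integrable_sq ht (hs t)).trans ?_
    gcongr
    exact le_max_of_le_left hi
  simp_rw [((hY _).integrable one_le_two).integral_eq_integral_Ioi_sub,
    hX.integral_eq_integral_Ioi_sub]
  refine .sub
    (tendsto_setIntegral_Ioi_of_abs_le_min_one_div_sq (le_max_right C 0) (fun i => ?_) ?_ ?_)
    (tendsto_setIntegral_Ioi_of_abs_le_min_one_div_sq (le_max_right C 0) (fun i => ?_) ?_ ?_)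
  · exact Antitone.measurable fun s t hst =>
      measureReal_mono fun ω (h : t < Y i ω) => hst.trans_lt h
  · exact htail.mono fun i hi => hi fun t ω (h : t < Y i ω) => h.le.trans (le_abs_self _)
  · filter_upwards [hD.ae_notMem volume] with t ht
    simp_rw [measureReal_setOf_lt_eq_one_sub (hY _).aemeasurable,
      measureReal_setOf_lt_eq_one_sub hX.aemeasurable]
    exact (hdist t (not_not.1 ht)).const_sub 1
  · exact Antitone.measurable fun s t hst =>
      measureReal_mono fun ω (h : Y i ω ≤ -t) => h.trans (neg_le_neg hst)
  · exact htail.mono fun i hi => hi fun t ω (h : Y i ω ≤ -t) => (le_neg.1 h).trans (neg_le_abs _)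
  · filter_upwards [(hD.preimage neg_injective).ae_notMem volume] with t ht
    exact hdist (-t) (not_not.1 ht)

lemma exists_eventually_integral_sq_le_of_tendsto_cdf (hX : AEMeasurable X P)
    (hY : ∀ i, MemLp (Y i) 2 P)
    (hdist : ∀ x, ContinuousAt (fun y => P.real {ω | X ω ≤ y}) x →
      Tendsto (fun i => P.real {ω | Y i ω ≤ x}) l (𝓝 (P.real {ω | X ω ≤ x})))
    {V : ℝ} (hV : ∀ᶠ i in l, variance (Y i) P ≤ V) :
    ∃ C, ∀ᶠ i in l, ∫ ω, Y i ω ^ 2 ∂P ≤ C := by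
  have := Measure.isProbabilityMeasure_map hX
  have hFcdf : (fun y => P.real {ω | X ω ≤ y}) = cdf (P.map X) := funext fun y => by
    rw [cdf_eq_real, map_measureReal_apply_of_aemeasurable hX measurableSet_Iic]
    rfl
  have hF := monotone_measureReal_setOf_le (P := P) X
  obtain ⟨a, ha, hFa⟩ := hF.exists_continuousAt_lt_of_tendsto_atTop
    (hFcdf ▸ tendsto_cdf_atTop _) (by norm_num : (3 / 4 : ℝ) < 1)
  obtain ⟨b, hb, hFb⟩ := hF.exists_continuousAt_gt_of_tendsto_atBot
    (hFcdf ▸ tendsto_cdf_atBot _) (by norm_num : (0 : ℝ) < 1 / 4)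
  refine ⟨V + (|a| + |b| + √(2 * V)) ^ 2, ?_⟩
  filter_upwards [(hdist a ha).eventually_const_lt hFa,
    (hdist b hb).eventually_lt_const hFb, hV] with i hia hib hiV
  have hwindow : 1 / 2 ≤ P.real {ω | |Y i ω| ≤ |a| + |b|} := by
    linarith [measureReal_le_le_add_measureReal_abs_le (P := P) (Y := Y i) a b]
  have hmean : |∫ ω, Y i ω ∂P| ≤ |a| + |b| + √(2 * V) := by
    refine (abs_integral_le_add_sqrt_variance_div (hY i) one_half_pos hwindow).trans ?_
    gcongr
    linarith
  rw [integral_sq_eq_variance_add_sq (hY i)]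
  have hmean_sq : (∫ ω, Y i ω ∂P) ^ 2 ≤ (|a| + |b| + √(2 * V)) ^ 2 := by
    rw [← sq_abs]
    exact pow_le_pow_left₀ (abs_nonneg _) hmean 2
  linarith

end

theorem stmt18_general {Ω : Type*} [MeasurableSpace Ω] (P : Measure Ω) [IsProbabilityMeasure P]
    (Xn : ℕ → Ω → ℝ) (X : Ω → ℝ)
    -- finite variances (finite second moments)
    (hL2n : ∀ n, MemLp (Xn n) 2 P) (hL2 : MemLp X 2 P)
    -- X_n → X in distribution
    (hdist : ∀ x : ℝ, ContinuousAt (fun y => (P {ω | X ω ≤ y}).toReal) x →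
      Tendsto (fun n => (P {ω | Xn n ω ≤ x}).toReal) atTop
        (nhds ((P {ω | X ω ≤ x}).toReal)))
    -- Var(X_n) → Var(X)
    (hvar : Tendsto (fun n => variance (Xn n) P) atTop (nhds (variance X P))) :
    Tendsto (fun n => ∫ ω, Xn n ω ∂P) atTop (nhds (∫ ω, X ω ∂P)) ∧
      Tendsto (fun n => ∫ ω, (Xn n ω) ^ 2 ∂P) atTop (nhds (∫ ω, (X ω) ^ 2 ∂P)) := by
  obtain ⟨C, hC⟩ := exists_eventually_integral_sq_le_of_tendsto_cdf hL2.aemeasurable hL2n hdist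
    (hvar.eventually_le_const (lt_add_one _))
  have hmean := tendsto_integral_of_tendsto_cdf_of_integral_sq_le hL2n (hL2.integrable one_le_two)
    hdist hC
  refine ⟨hmean, ?_⟩
  simp_rw [integral_sq_eq_variance_add_sq (hL2n _), integral_sq_eq_variance_add_sq hL2]
  exact hvar.add (hmean.pow 2)

/-- Lemma 1: if `X_n → X` in distribution and `Var(X_n) → Var(X) < ∞`, then
`E X_n → E X` and `E X_n² → E X²`. Convergence in distribution is formalized as
convergence of CDFs at every continuity point of the limit CDF. -/
theorem stmt18 {Ω : Type*} [MeasurableSpace Ω] (P : Measure Ω) [IsProbabilityMeasure P]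
    (Xn : ℕ → Ω → ℝ) (X : Ω → ℝ)
    (hXn : ∀ n, Measurable (Xn n)) (hX : Measurable X)
    -- finite variances (finite second moments)
    (hL2n : ∀ n, MemLp (Xn n) 2 P) (hL2 : MemLp X 2 P)
    -- X_n → X in distribution
    (hdist : ∀ x : ℝ, ContinuousAt (fun y => (P {ω | X ω ≤ y}).toReal) x →
      Tendsto (fun n => (P {ω | Xn n ω ≤ x}).toReal) atTop
        (nhds ((P {ω | X ω ≤ x}).toReal)))
    -- Var(X_n) → Var(X)
    (hvar : Tendsto (fun n => variance (Xn n) P) atTop (nhds (variance X P))) :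
    Tendsto (fun n => ∫ ω, Xn n ω ∂P) atTop (nhds (∫ ω, X ω ∂P)) ∧
      Tendsto (fun n => ∫ ω, (Xn n ω) ^ 2 ∂P) atTop (nhds (∫ ω, (X ω) ^ 2 ∂P)) :=
  stmt18_general P Xn X hL2n hL2 hdist hvar
end
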